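/- Let G be a finite connected non-complete simple graph with clique number ω(G) ≥ 3 and diameter D = diam(G), and write ω(G) = qD + s with 0 ≤ s ≤ D − 1. Then mob(G) ≥ mob*(G) ≥ 1 + ⌈ω(G)/D⌉ − θ(s), where θ(s) = 1 if s = 1 and θ(s) = 0 otherwise. -/

import Mathlib

open SimpleGraph

variable {V : Type*} {W : Type*}

/-- `S` is a general position set of `G`: no shortest path of `G` contains more than two
vertices of `S`. -/
def IsGenPosSet (G : SimpleGraph V) (S : Set V) : Prop :=
  ∀ ⦃u v : V⦄ (p : G.Walk u v), p.IsPath → p.length = G.dist u v →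
    (S ∩ {x | x ∈ p.support}).ncard ≤ 2

/-- `S` is a mutual visibility set of `G`: any two vertices of `S` are joined by a shortest
path containing no further vertex of `S`. -/
def IsMutVisSet (G : SimpleGraph V) (S : Set V) : Prop :=
  ∀ ⦃u⦄, u ∈ S → ∀ ⦃v⦄, v ∈ S → ∃ p : G.Walk u v,
    p.IsPath ∧ p.length = G.dist u v ∧ ∀ x ∈ p.support, x ∈ S → x = u ∨ x = v

/-- A legal move (with respect to the position property `P`) of a configuration of `t` robots
on distinct vertices: one robot moves to an adjacent unoccupied vertex, and the resulting set
of occupied vertices again satisfies `P`. -/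
def LegalMove (G : SimpleGraph V) (P : Set V → Prop) {t : ℕ} (f g : Fin t ↪ V) : Prop :=
  ∃ i : Fin t, G.Adj (f i) (g i) ∧ g i ∉ Set.range ⇑f ∧ (∀ j, j ≠ i → g j = f j) ∧
    P (Set.range ⇑g)

/-- A configuration is a mobile `P`-configuration if it satisfies `P` and there is a sequence
of legal moves starting from it such that every vertex is visited by some robot. -/
def IsMobileConfig (G : SimpleGraph V) (P : Set V → Prop) {t : ℕ} (f : Fin t ↪ V) : Prop :=
  P (Set.range ⇑f) ∧ ∃ (N : ℕ) (c : ℕ → (Fin t ↪ V)), c 0 = f ∧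
    (∀ k < N, LegalMove G P (c k) (c (k + 1))) ∧ ∀ v : V, ∃ k ≤ N, ∃ i, c k i = v

/-- A configuration is completely mobile if it is mobile and moreover every robot can visit
every vertex via a sequence of legal moves. -/
def IsCompletelyMobileConfig (G : SimpleGraph V) (P : Set V → Prop) {t : ℕ}
    (f : Fin t ↪ V) : Prop :=
  IsMobileConfig G P f ∧ ∀ (v : V) (i : Fin t), ∃ (N : ℕ) (c : ℕ → (Fin t ↪ V)), c 0 = f ∧
    (∀ k < N, LegalMove G P (c k) (c (k + 1))) ∧ ∃ k ≤ N, c k i = v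

/-- The mobile general position number `mob(G)`. -/
noncomputable def mobGP (G : SimpleGraph V) : ℕ :=
  sSup {t : ℕ | ∃ f : Fin t ↪ V, IsMobileConfig G (IsGenPosSet G) f}

/-- The completely mobile general position number `mob*(G)`. -/
noncomputable def cmobGP (G : SimpleGraph V) : ℕ :=
  sSup {t : ℕ | ∃ f : Fin t ↪ V, IsCompletelyMobileConfig G (IsGenPosSet G) f}

/-- The mobile mutual visibility number `mobmv(G)`. -/
noncomputable def mobMV (G : SimpleGraph V) : ℕ :=
  sSup {t : ℕ | ∃ f : Fin t ↪ V, IsMobileConfig G (IsMutVisSet G) f}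

/-- The completely mobile mutual visibility number `mobmv*(G)`. -/
noncomputable def cmobMV (G : SimpleGraph V) : ℕ :=
  sSup {t : ℕ | ∃ f : Fin t ↪ V, IsCompletelyMobileConfig G (IsMutVisSet G) f}

/-- The mutual visibility number `μ(G)`. -/
noncomputable def muMV (G : SimpleGraph V) : ℕ :=
  sSup {n : ℕ | ∃ S : Set V, IsMutVisSet G S ∧ S.ncard = n}

/-- `μ₂(G)`: the largest cardinality of a mutual visibility set whose vertices are pairwise at
distance at most `2`. -/
noncomputable def muMV2 (G : SimpleGraph V) : ℕ :=
  sSup {n : ℕ | ∃ S : Set V, IsMutVisSet G S ∧ (∀ u ∈ S, ∀ v ∈ S, G.dist u v ≤ 2) ∧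
    S.ncard = n}

/-- The join `G ∨ H` of two graphs: the disjoint union together with all edges between the
two vertex sets. -/
def graphJoin (G : SimpleGraph V) (H : SimpleGraph W) : SimpleGraph (V ⊕ W) where
  Adj x y := match x, y with
    | Sum.inl a, Sum.inl b => G.Adj a b
    | Sum.inr a, Sum.inr b => H.Adj a b
    | Sum.inl _, Sum.inr _ => True
    | Sum.inr _, Sum.inl _ => True
  symm := ⟨by rintro (a | a) (b | b) h <;> simp_all <;> exact h.symm⟩
  loopless := ⟨by rintro (a | a) h <;> simp_all⟩

/-- The strong product `G ⊠ H` of two graphs. -/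
def strongProd (G : SimpleGraph V) (H : SimpleGraph W) : SimpleGraph (V × W) where
  Adj x y := (x.1 = y.1 ∧ H.Adj x.2 y.2) ∨ (x.2 = y.2 ∧ G.Adj x.1 y.1) ∨
    (G.Adj x.1 y.1 ∧ H.Adj x.2 y.2)
  symm := by
    constructor
    rintro ⟨a, b⟩ ⟨c, d⟩ (⟨h1, h2⟩ | ⟨h1, h2⟩ | ⟨h1, h2⟩)
    · exact Or.inl ⟨h1.symm, h2.symm⟩
    · exact Or.inr (Or.inl ⟨h1.symm, h2.symm⟩)
    · exact Or.inr (Or.inr ⟨h1.symm, h2.symm⟩)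
  loopless := ⟨by rintro ⟨a, b⟩ (⟨_, h⟩ | ⟨_, h⟩ | ⟨h, _⟩) <;> simp_all⟩

/-- A vertex `u` is a hub if any two distinct non-adjacent vertices different from `u` are
both adjacent to `u`. -/
def IsHub (G : SimpleGraph V) (u : V) : Prop :=
  ∀ ⦃w₁ w₂ : V⦄, w₁ ≠ u → w₂ ≠ u → w₁ ≠ w₂ → ¬G.Adj w₁ w₂ → G.Adj w₁ u ∧ G.Adj w₂ u

/-- A block graph: every block is complete; equivalently, the vertices of any cycle form a
clique. -/
def IsBlockGraph (G : SimpleGraph V) : Prop :=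
  ∀ (v : V) (c : G.Walk v v), c.IsCycle → G.IsClique {x | x ∈ c.support}

/-- The graph obtained from the complete graph `K n` (on vertices `1, ..., n`) by attaching
one pendant vertex `0`, adjacent only to vertex `1`. -/
def cliqueWithLeaf (n : ℕ) : SimpleGraph (Fin (n + 1)) :=
  SimpleGraph.fromRel (fun i j => (i ≠ 0 ∧ j ≠ 0) ∨ (i = 0 ∧ j = 1))

/-- `G` is (isomorphic to) a path graph. -/
def IsPathGraph (G : SimpleGraph V) : Prop :=
  ∃ n : ℕ, Nonempty (G ≃g pathGraph n)


/-! Start with the robots on a maximum clique `Q`. Subsets of a clique are in general position,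
and since `Q` keeps a free vertex, the robots can be rearranged arbitrarily inside `Q`. To bring
robot `i` to a vertex `v ∉ Q`, take `w ∈ Q` nearest to `v` and a geodesic `w = x₀, …, x_k = v`.
For `u ∈ Q \ {w}` the sequence `d(xⱼ, u) - j` drops from `1` to `0` once and for all, at one of
at most `diam G` thresholds; by pigeonhole `n + 1` vertices of `Q \ {w}` share their threshold
as soon as `diam G * n < ω(G) - 1`. With the other robots parked on those vertices, each `xⱼ` is
equidistant from all of them, so no three robots ever lie on a geodesic and robot `i` walks to
`v`. The arithmetic of `ω(G) = q diam G + s` turns this into `n + 2 = 1 + ⌈ω(G)/diam G⌉ - θ(s)`.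
-/

open scoped Finset
open Relation Function

section GeneralPosition

variable {G : SimpleGraph V}

lemma SimpleGraph.Walk.dist_getVert_getVert {u v : V} {p : G.Walk u v}
    (hp : p.length = G.dist u v) {i j : ℕ} (hij : i ≤ j) (hj : j ≤ p.length) :
    G.dist (p.getVert i) (p.getVert j) = j - i := by
  have h := length_eq_dist_of_subwalk hp
    (((p.drop i).isSubwalk_take (j - i)).trans (p.isSubwalk_drop i))
  rw [Walk.take_length, Walk.drop_length, Walk.drop_getVert, Nat.add_sub_cancel' hij,
    min_eq_left (by omega)] at h
  exact h.symm

lemma isGenPosSet_of_forall_dist_add_dist_ne {S : Set V}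
    (h : ∀ a ∈ S, ∀ b ∈ S, ∀ c ∈ S, a ≠ b → b ≠ c → a ≠ c →
      G.dist a b + G.dist b c ≠ G.dist a c) :
    IsGenPosSet G S := by
  intro u v p _ hp
  by_contra! hlt
  obtain ⟨a, ⟨haS, ha⟩, b, ⟨hbS, hb⟩, c, ⟨hcS, hc⟩, hab, hac, hbc⟩ :=
    (Set.two_lt_ncard (p.support.finite_toSet.inter_of_right S)).mp hlt
  obtain ⟨i, rfl, hi⟩ := Walk.mem_support_iff_exists_getVert.mp ha
  obtain ⟨j, rfl, hj⟩ := Walk.mem_support_iff_exists_getVert.mp hb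
  obtain ⟨l, rfl, hl⟩ := Walk.mem_support_iff_exists_getVert.mp hc
  have hd : ∀ x y, x ≤ p.length → y ≤ p.length →
      G.dist (p.getVert x) (p.getVert y) = max x y - min x y := by
    intro x y hx hy
    rcases le_total x y with hxy | hxy
    · rw [p.dist_getVert_getVert hp hxy hy]; omega
    · rw [dist_comm, p.dist_getVert_getVert hp hxy hx]; omega
  have h₁ := h _ haS _ hbS _ hcS hab hbc hac
  have h₂ := h _ hbS _ haS _ hcS (Ne.symm hab) hac hbc
  have h₃ := h _ haS _ hcS _ hbS hac (Ne.symm hbc) hab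
  rw [hd i j hi hj, hd j l hj hl, hd i l hi hl] at h₁
  rw [hd j i hj hi, hd i l hi hl, hd j l hj hl] at h₂
  rw [hd i l hi hl, hd l j hl hj, hd i j hi hj] at h₃
  have : i ≠ j := fun e => hab (e ▸ rfl)
  have : i ≠ l := fun e => hac (e ▸ rfl)
  have : j ≠ l := fun e => hbc (e ▸ rfl)
  omega

lemma SimpleGraph.IsClique.isGenPosSet {S : Set V} (hS : G.IsClique S) : IsGenPosSet G S :=
  isGenPosSet_of_forall_dist_add_dist_ne fun a ha b hb c hc hab hbc hac => by
    rw [dist_eq_one_iff_adj.mpr (hS ha hb hab), dist_eq_one_iff_adj.mpr (hS hb hc hbc),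
      dist_eq_one_iff_adj.mpr (hS ha hc hac)]
    omega

lemma isGenPosSet_insert_of_forall_dist_eq {S : Set V} (hS : G.IsClique S) {x : V} {m : ℕ}
    (hm : 0 < m) (hx : ∀ u ∈ S, G.dist x u = m) : IsGenPosSet G (insert x S) := by
  classical
  have hd : ∀ a ∈ insert x S, ∀ b ∈ insert x S, a ≠ b →
      G.dist a b = if a = x ∨ b = x then m else 1 := by
    rintro a (rfl | ha) b (rfl | hb) hab
    · exact absurd rfl hab
    · simp [hx b hb]
    · simp [SimpleGraph.dist_comm (u := a), hx a ha]
    · have hxS : x ∉ S := fun h => hm.ne' (by simpa using (hx x h).symm)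
      have hax : a ≠ x := fun h => hxS (h ▸ ha)
      have hbx : b ≠ x := fun h => hxS (h ▸ hb)
      simp [hax, hbx, dist_eq_one_iff_adj.mpr (hS ha hb hab)]
  refine isGenPosSet_of_forall_dist_add_dist_ne fun a ha b hb c hc hab hbc hac => ?_
  rw [hd a ha b hb hab, hd b hb c hc hbc, hd a ha c hc hac]
  split_ifs <;> first | omega | tauto

end GeneralPosition

lemma Nat.exists_iff_le_of_imp_succ (p : ℕ → Prop) (k : ℕ) (h : ∀ j < k, p j → p (j + 1)) :
    ∃ m ≤ k + 1, ∀ j ≤ k, p j ↔ m ≤ j := by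
  classical
  by_cases hex : ∃ j, j ≤ k ∧ p j
  · refine ⟨Nat.find hex, (Nat.find_spec hex).1.trans k.le_succ, fun j hj =>
      ⟨fun hq => Nat.find_min' hex ⟨hj, hq⟩, fun hmj => ?_⟩⟩
    induction j, hmj using Nat.le_induction with
    | base => exact (Nat.find_spec hex).2
    | succ j _ ihj => exact h j (by omega) (ihj (by omega))
  · exact ⟨k + 1, le_rfl, fun j hj => ⟨fun hq => absurd ⟨j, hj, hq⟩ hex, fun _ => by omega⟩⟩

namespace SimpleGraph

variable {G : SimpleGraph V}

lemma Connected.dist_getVert_eq_or_eq_add_one (hconn : G.Connected) {w v u : V}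
    {p : G.Walk w v} (hp : p.length = G.dist w v) (hadj : G.Adj w u)
    (hmin : G.dist w v ≤ G.dist u v) {j : ℕ} (hj : j ≤ p.length) :
    G.dist (p.getVert j) u = j ∨ G.dist (p.getVert j) u = j + 1 := by
  have h₁ : G.dist w (p.getVert j) = j := by
    simpa using p.dist_getVert_getVert hp (Nat.zero_le j) hj
  have h₂ : G.dist (p.getVert j) v = p.length - j := by
    simpa using p.dist_getVert_getVert hp hj le_rfl
  have h₃ := hconn.dist_triangle (u := p.getVert j) (v := w) (w := u)
  have h₄ := hconn.dist_triangle (u := u) (v := p.getVert j) (w := v)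
  rw [dist_comm (u := p.getVert j) (v := w), h₁, dist_eq_one_iff_adj.mpr hadj] at h₃
  rw [dist_comm (u := u) (v := p.getVert j), h₂] at h₄
  omega

lemma Connected.exists_dist_getVert_eq_ite (hconn : G.Connected) (hD : G.ediam ≠ ⊤)
    {w v u : V} {p : G.Walk w v} (hp : p.length = G.dist w v) (hadj : G.Adj w u)
    (hmin : G.dist w v ≤ G.dist u v) :
    ∃ m, 1 ≤ m ∧ m ≤ G.diam ∧
      ∀ j ≤ p.length, G.dist (p.getVert j) u = if j < m then j + 1 else j := by
  have hnear := fun j (hj : j ≤ p.length) => hconn.dist_getVert_eq_or_eq_add_one hp hadj hmin hj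
  obtain ⟨m, hm, hthr⟩ := Nat.exists_iff_le_of_imp_succ (fun j => G.dist (p.getVert j) u = j)
    p.length fun j hj hq => by
      have := hconn.dist_triangle (u := p.getVert (j + 1)) (v := p.getVert j) (w := u)
      rw [dist_eq_one_iff_adj.mpr (p.adj_getVert_succ hj).symm, hq] at this
      have := hnear (j + 1) hj
      omega
  have hval : ∀ j ≤ p.length, G.dist (p.getVert j) u = if j < m then j + 1 else j := by
    intro j hj
    have := hthr j hj
    rcases hnear j hj with h | h <;> split_ifs <;> omega
  refine ⟨m, ?_, ?_, hval⟩
  · have := hthr 0 (Nat.zero_le _)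
    rw [Walk.getVert_zero, dist_eq_one_iff_adj.mpr hadj] at this
    omega
  · have hlen : p.length ≤ G.diam := hp ▸ dist_le_diam hD
    have hlast := hval p.length le_rfl
    have : G.dist (p.getVert p.length) u ≤ G.diam := dist_le_diam hD
    split_ifs at hlast <;> omega

lemma Connected.exists_subset_forall_dist_eq_of_isClique [DecidableEq V] (hconn : G.Connected)
    (hD : G.ediam ≠ ⊤) {Q : Finset V} (hQ : G.IsClique (Q : Set V)) {w v : V} (hw : w ∈ Q)
    (hmin : ∀ u ∈ Q, G.dist w v ≤ G.dist u v) {p : G.Walk w v} (hp : p.length = G.dist w v)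
    {n : ℕ} (hn : G.diam * n < #Q - 1) :
    ∃ S ⊆ Q.erase w, #S = n + 1 ∧ ∀ x ∈ p.support, ∃ m, 0 < m ∧ ∀ u ∈ S, G.dist x u = m := by
  have := fun u (hu : u ∈ Q.erase w) => hconn.exists_dist_getVert_eq_ite hD hp
    (hQ hw (Finset.mem_of_mem_erase hu) (Finset.ne_of_mem_erase hu).symm)
    (hmin u (Finset.mem_of_mem_erase hu))
  choose! θ hθ1 hθD hθ using this
  obtain ⟨ℓ, hℓ, hfiber⟩ := Finset.exists_lt_card_fiber_of_mul_lt_card_of_maps_to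
    (t := Finset.Icc 1 G.diam) (fun u hu => Finset.mem_Icc.mpr ⟨hθ1 u hu, hθD u hu⟩)
    (by simpa [Finset.card_erase_of_mem hw] using hn)
  obtain ⟨S, hS, hScard⟩ := Finset.exists_subset_card_eq hfiber
  refine ⟨S, hS.trans (Finset.filter_subset _ _), hScard, fun x hx => ?_⟩
  obtain ⟨j, rfl, hj⟩ := Walk.mem_support_iff_exists_getVert.mp hx
  have hℓ1 := (Finset.mem_Icc.mp hℓ).1
  refine ⟨if j < ℓ then j + 1 else j, by split_ifs <;> omega, fun u hu => ?_⟩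
  obtain ⟨hu, hθu⟩ := Finset.mem_filter.mp (hS hu)
  rw [hθ u hu j hj, hθu]

end SimpleGraph

namespace Relation

variable {α : Type*} {r : α → α → Prop}

lemma exists_seq_append {N₁ N₂ : ℕ} {c₁ c₂ : ℕ → α} (h₁ : ∀ k < N₁, r (c₁ k) (c₁ (k + 1)))
    (h₂ : ∀ k < N₂, r (c₂ k) (c₂ (k + 1))) (h : c₁ N₁ = c₂ 0) :
    ∃ c : ℕ → α, (∀ k ≤ N₁, c k = c₁ k) ∧ (∀ k ≤ N₂, c (N₁ + k) = c₂ k) ∧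
      ∀ k < N₁ + N₂, r (c k) (c (k + 1)) := by
  refine ⟨fun k => if k < N₁ then c₁ k else c₂ (k - N₁), fun k hk => ?_, fun k _ => ?_,
    fun k hk => ?_⟩
  · rcases hk.lt_or_eq with hk | rfl
    · simp [hk]
    · simp [h]
  · simp
  · by_cases hk₁ : k + 1 < N₁
    · simpa [hk₁, show k < N₁ by omega] using h₁ k (by omega)
    by_cases hk₂ : k < N₁
    · obtain rfl : k + 1 = N₁ := by omega
      simpa [hk₂, ← h] using h₁ k (by omega)
    · simpa [hk₁, hk₂, show k + 1 - N₁ = k - N₁ + 1 by omega] using h₂ (k - N₁) (by omega)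

lemma ReflTransGen.exists_seq {a b : α} (h : ReflTransGen r a b) :
    ∃ (N : ℕ) (c : ℕ → α), c 0 = a ∧ (∀ k < N, r (c k) (c (k + 1))) ∧ c N = b := by
  induction h with
  | refl => exact ⟨0, fun _ => a, rfl, by simp, rfl⟩
  | @tail b d _ hbd ih =>
    obtain ⟨N, c, h0, hc, hN⟩ := ih
    obtain ⟨c', h₁, h₂, hc'⟩ := exists_seq_append (N₂ := 1)
      (c₂ := fun k => if k = 0 then b else d) hc (by simpa using hbd) (by simp [hN])
    exact ⟨N + 1, c', by rw [h₁ 0 (by omega), h0], hc', by simpa using h₂ 1 le_rfl⟩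

lemma exists_closed_seq_through {a : α} (L : List α)
    (h : ∀ b ∈ L, ReflTransGen r a b ∧ ReflTransGen r b a) :
    ∃ (N : ℕ) (c : ℕ → α), c 0 = a ∧ (∀ k < N, r (c k) (c (k + 1))) ∧ c N = a ∧
      ∀ b ∈ L, ∃ k ≤ N, c k = b := by
  induction L with
  | nil => exact ⟨0, fun _ => a, rfl, by simp, rfl, by simp⟩
  | cons b L ih =>
    obtain ⟨N, c, h0, hc, hN, hL⟩ := ih fun x hx => h x (List.mem_cons_of_mem b hx)
    obtain ⟨N₁, c₁, h₁0, hc₁, hN₁⟩ := (h b List.mem_cons_self).1.exists_seq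
    obtain ⟨N₂, c₂, h₂0, hc₂, hN₂⟩ := (h b List.mem_cons_self).2.exists_seq
    obtain ⟨c₁₂, e₁, e₂, hc₁₂⟩ := exists_seq_append hc₁ hc₂ (hN₁.trans h₂0.symm)
    obtain ⟨c', e₁', e₂', hc'⟩ := exists_seq_append hc₁₂ hc
      (by rw [e₂ N₂ le_rfl, hN₂, h0])
    refine ⟨N₁ + N₂ + N, c', by rw [e₁' 0 (by omega), e₁ 0 (by omega), h₁0], hc',
      by rw [e₂' N le_rfl, hN], ?_⟩
    rintro x (_ | ⟨_, hx⟩)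
    · exact ⟨N₁, by omega, by rw [e₁' N₁ (by omega), e₁ N₁ le_rfl, hN₁]⟩
    · obtain ⟨k, hk, rfl⟩ := hL x hx
      exact ⟨N₁ + N₂ + k, by omega, e₂' k hk⟩

end Relation

section Configurations

variable {G : SimpleGraph V} {P : Set V → Prop} {t : ℕ}

lemma Finset.exists_embedding_range_eq {T : Finset V} (hT : #T = t) {x : V} (hx : x ∈ T)
    (i : Fin t) : ∃ f : Fin t ↪ V, Set.range f = T ∧ f i = x := by
  classical
  let e : Fin t ≃ T := (finCongr hT.symm).trans T.equivFin.symm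
  let e' := e.trans (Equiv.swap (e i) ⟨x, hx⟩)
  refine ⟨e'.toEmbedding.trans (Embedding.subtype _), ?_, by simp [e']⟩
  ext y
  exact ⟨by rintro ⟨j, rfl⟩; exact (e' j).2, fun hy => ⟨e'.symm ⟨y, hy⟩, by simp⟩⟩

lemma LegalMove.prop {f g : Fin t ↪ V} (h : LegalMove G P f g) : P (Set.range g) :=
  h.choose_spec.2.2.2

lemma LegalMove.symm {f g : Fin t ↪ V} (h : LegalMove G P f g) (hf : P (Set.range f)) :
    LegalMove G P g f := by
  obtain ⟨i, hadj, hfree, hrest, -⟩ := h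
  refine ⟨i, hadj.symm, ?_, fun j hj => (hrest j hj).symm, hf⟩
  rintro ⟨j, hj⟩
  by_cases hji : j = i
  · exact hadj.ne (hji ▸ hj).symm
  · exact hji (f.injective ((hrest j hji).symm.trans hj))

lemma Relation.ReflTransGen.legalMove_prop {f g : Fin t ↪ V}
    (h : ReflTransGen (LegalMove G P) f g) (hf : P (Set.range f)) : P (Set.range g) := by
  cases h.cases_tail with
  | inl h => exact h ▸ hf
  | inr h => exact h.choose_spec.2.prop

lemma Relation.ReflTransGen.legalMove_symm {f g : Fin t ↪ V}
    (h : ReflTransGen (LegalMove G P) f g) (hf : P (Set.range f)) :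
    ReflTransGen (LegalMove G P) g f := by
  induction h with
  | refl => exact .refl
  | tail hfg hgh ih => exact .head (hgh.symm (hfg.legalMove_prop hf)) ih

lemma range_setValue [DecidableEq V] {f : Fin t ↪ V} {x : V} (i : Fin t)
    (hx : x ∉ Set.range f) : Set.range (f.setValue i x) = insert x (Set.range f \ {f i}) := by
  ext y
  constructor
  · rintro ⟨j, rfl⟩
    by_cases hj : j = i
    · simp [hj]
    · rw [Embedding.setValue_eq_of_ne hj fun h => hx ⟨j, h⟩]
      exact Or.inr ⟨⟨j, rfl⟩, fun h => hj (f.injective h)⟩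
  · rintro (rfl | ⟨⟨j, rfl⟩, hj⟩)
    · exact ⟨i, by simp⟩
    · have hji : j ≠ i := fun h => hj (h ▸ rfl)
      exact ⟨j, Embedding.setValue_eq_of_ne hji fun h => hx ⟨j, h⟩⟩

lemma legalMove_setValue [DecidableEq V] {f : Fin t ↪ V} {i : Fin t} {x : V}
    (hadj : G.Adj (f i) x) (hx : x ∉ Set.range f) (hP : P (insert x (Set.range f \ {f i}))) :
    LegalMove G P f (f.setValue i x) :=
  ⟨i, by simpa using hadj, by simpa using hx,
    fun j hj => Embedding.setValue_eq_of_ne hj fun h => hx ⟨j, h⟩,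
    by rwa [range_setValue i hx]⟩

lemma exists_reflTransGen_apply_eq_of_walk [DecidableEq V] {w y : V} (p : G.Walk w y)
    {f : Fin t ↪ V} {i : Fin t} (hw : f i = w)
    (h : ∀ x ∈ p.support, x ∉ Set.range f \ {f i} ∧ P (insert x (Set.range f \ {f i}))) :
    ∃ g, Relation.ReflTransGen (LegalMove G P) f g ∧ g i = y := by
  induction p generalizing f with
  | nil => exact ⟨_, .refl, hw⟩
  | @cons w w' y hadj q ih =>
    have hw' := h w' (by simp)
    have hfree : w' ∉ Set.range f := fun hmem => hw'.1 ⟨hmem, fun e => hadj.ne (hw ▸ e).symm⟩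
    have hR : Set.range (f.setValue i w') \ {f.setValue i w' i} = Set.range f \ {f i} := by
      rw [range_setValue i hfree, Embedding.setValue_eq]
      exact Set.insert_sdiff_self_of_notMem hw'.1
    obtain ⟨g, hg, hgi⟩ := ih (f := f.setValue i w') (by simp)
      (hR ▸ fun x hx => h x (by simp [hx]))
    exact ⟨g, .head (legalMove_setValue (hw ▸ hadj) hfree hw'.2) hg, hgi⟩

lemma exists_reflTransGen_apply_eq_of_isClique [DecidableEq V] {Q : Finset V}
    (hQ : G.IsClique (Q : Set V)) (hP : ∀ S ⊆ (Q : Set V), P S) (ht : t < #Q)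
    {f : Fin t ↪ V} (hf : Set.range f ⊆ Q) (i : Fin t) {x : V} (hx : x ∈ Q) :
    ∃ g, ReflTransGen (LegalMove G P) f g ∧ Set.range g ⊆ Q ∧ g i = x ∧
      ∀ j ≠ i, g j = f j ∨ f j = x := by
  have move : ∀ (h : Fin t ↪ V) (j : Fin t) {y : V}, Set.range h ⊆ Q → y ∈ Q →
      y ∉ Set.range h → LegalMove G P h (h.setValue j y) ∧ Set.range (h.setValue j y) ⊆ Q := by
    intro h j y hh hy hyh
    have hsub : insert y (Set.range h \ {h j}) ⊆ Q :=
      Set.insert_subset hy (Set.sdiff_subset.trans hh)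
    exact ⟨legalMove_setValue (hQ (hh ⟨j, rfl⟩) hy fun e => hyh ⟨j, e⟩) hyh (hP _ hsub),
      range_setValue j hyh ▸ hsub⟩
  by_cases hxf : x ∈ Set.range f
  · obtain ⟨j, rfl⟩ := hxf
    by_cases hji : j = i
    · exact ⟨f, .refl, hf, hji ▸ rfl, fun _ _ => Or.inl rfl⟩
    -- a robot other than `i` sits on the target: first move it to a free vertex of `Q`
    obtain ⟨z, hzQ, hzf⟩ : ∃ z ∈ Q, z ∉ Set.range f := by
      obtain ⟨z, hzQ, hz⟩ := Finset.exists_mem_notMem_of_card_lt_card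
        (s := Finset.univ.map f) (t := Q) (by simpa using ht)
      exact ⟨z, hzQ, fun ⟨l, hl⟩ => hz (by simp [← hl])⟩
    set f₁ := f.setValue j z
    have hxf₁ : f j ∉ Set.range f₁ := by
      rw [range_setValue j hzf]
      rintro (h | ⟨-, h⟩)
      exacts [hzf ⟨j, h⟩, h rfl]
    obtain ⟨m₁, hf₁Q⟩ := move f j hf hzQ hzf
    obtain ⟨m₂, hf₂Q⟩ := move f₁ i hf₁Q (hf ⟨j, rfl⟩) hxf₁
    refine ⟨f₁.setValue i (f j), .tail (.single m₁) m₂, hf₂Q, by simp, fun l hl => ?_⟩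
    rw [Embedding.setValue_eq_of_ne hl fun h => hxf₁ ⟨l, h⟩]
    by_cases hlj : l = j
    · exact Or.inr (hlj ▸ rfl)
    · exact Or.inl (Embedding.setValue_eq_of_ne hlj fun h => hzf ⟨l, h⟩)
  · obtain ⟨m, hf'Q⟩ := move f i hf hx hxf
    exact ⟨_, .single m, hf'Q, by simp,
      fun j hj => Or.inl (Embedding.setValue_eq_of_ne hj fun h => hxf ⟨j, h⟩)⟩

lemma reflTransGen_of_isClique {Q : Finset V} (hQ : G.IsClique (Q : Set V))
    (hP : ∀ S ⊆ (Q : Set V), P S) (ht : t < #Q) {f g : Fin t ↪ V} (hf : Set.range f ⊆ Q)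
    (hg : Set.range g ⊆ Q) : ReflTransGen (LegalMove G P) f g := by
  classical
  induction hn : #{i | f i ≠ g i} using Nat.strong_induction_on generalizing f with
  | _ n ih =>
    by_cases hfg : f = g
    · exact hfg ▸ .refl
    obtain ⟨i, hi⟩ := DFunLike.ne_iff.mp hfg
    obtain ⟨f', hff', hf'Q, hf'i, hf'⟩ :=
      exists_reflTransGen_apply_eq_of_isClique hQ hP ht hf i (hg ⟨i, rfl⟩)
    refine hff'.trans (ih _ (hn ▸ Finset.card_lt_card ?_) hf'Q rfl)
    refine (Finset.ssubset_iff_of_subset fun j hj => ?_).mpr ⟨i, by simpa using hi, by simp [hf'i]⟩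
    simp only [Finset.mem_filter, Finset.mem_univ, true_and] at hj ⊢
    have hji : j ≠ i := by rintro rfl; exact hj hf'i
    rcases hf' j hji with h | h
    · rwa [← h]
    · exact h ▸ fun e => hji (g.injective e.symm)

lemma isCompletelyMobileConfig_of_forall_exists_reflTransGen [Fintype V] {f : Fin t ↪ V}
    (ht : 0 < t) (hf : P (Set.range f))
    (h : ∀ v i, ∃ g, ReflTransGen (LegalMove G P) f g ∧ g i = v) :
    IsCompletelyMobileConfig G P f := by
  choose g hg hgi using h
  refine ⟨⟨hf, ?_⟩, fun v i => ?_⟩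
  · obtain ⟨N, c, h0, hc, -, hvis⟩ := exists_closed_seq_through
      (Finset.univ.toList.map fun v => g v ⟨0, ht⟩)
      (by simpa using fun v => ⟨hg v _, (hg v _).legalMove_symm hf⟩)
    refine ⟨N, c, h0, hc, fun v => ?_⟩
    obtain ⟨k, hk, hck⟩ := hvis _ (List.mem_map_of_mem (Finset.mem_toList.mpr (Finset.mem_univ v)))
    exact ⟨k, hk, ⟨0, ht⟩, by rw [hck, hgi]⟩
  · obtain ⟨N, c, h0, hc, hN⟩ := (hg v i).exists_seq
    exact ⟨N, c, h0, hc, N, le_rfl, by rw [hN, hgi]⟩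

end Configurations

theorem SimpleGraph.Connected.exists_isCompletelyMobileConfig_isGenPosSet [Fintype V]
    {G : SimpleGraph V} (hconn : G.Connected) {Q : Finset V} (hQ : G.IsClique (Q : Set V))
    {n : ℕ} (hn : G.diam * n < #Q - 1) (hnQ : n + 2 < #Q) :
    ∃ f : Fin (n + 2) ↪ V, IsCompletelyMobileConfig G (IsGenPosSet G) f := by
  classical
  obtain ⟨x₀, hx₀⟩ : Q.Nonempty := Finset.card_pos.mp (by omega)
  have hD : G.ediam ≠ ⊤ := by
    have : Nonempty V := ⟨x₀⟩
    exact connected_iff_ediam_ne_top.mp hconn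
  have hP : ∀ S ⊆ (Q : Set V), IsGenPosSet G S := fun S hS => (hQ.subset hS).isGenPosSet
  have hQcfg : ∀ x ∈ Q, ∀ i, ∃ f : Fin (n + 2) ↪ V, Set.range f ⊆ Q ∧ f i = x := by
    intro x hx i
    obtain ⟨T, hxT, hTQ, hT⟩ := Finset.exists_subsuperset_card_eq
      (Finset.singleton_subset_iff.mpr hx) (by simp) hnQ.le
    obtain ⟨f, hf, hfi⟩ := Finset.exists_embedding_range_eq hT (hxT (Finset.mem_singleton_self x)) i
    exact ⟨f, hf ▸ Finset.coe_subset.mpr hTQ, hfi⟩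
  obtain ⟨f₀, hf₀, -⟩ := hQcfg x₀ hx₀ 0
  refine ⟨f₀, isCompletelyMobileConfig_of_forall_exists_reflTransGen (by omega) (hP _ hf₀)
    fun v i => ?_⟩
  by_cases hv : v ∈ Q
  · obtain ⟨g, hg, hgi⟩ := hQcfg v hv i
    exact ⟨g, reflTransGen_of_isClique hQ hP (by omega) hf₀ hg, hgi⟩
  obtain ⟨w, hw, hmin⟩ := Q.exists_min_image (G.dist · v) ⟨x₀, hx₀⟩
  obtain ⟨p, hp⟩ := hconn.exists_walk_length_eq_dist w v
  obtain ⟨S, hSQ, hS, hSeq⟩ := hconn.exists_subset_forall_dist_eq_of_isClique hD hQ hw hmin hp hn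
  have hwS : w ∉ S := fun h => (Finset.mem_erase.mp (hSQ h)).1 rfl
  have hSQ' : (S : Set V) ⊆ Q := fun u hu => Finset.mem_of_mem_erase (hSQ hu)
  obtain ⟨f, hf, hfi⟩ := Finset.exists_embedding_range_eq (T := insert w S)
    (by rw [Finset.card_insert_of_notMem hwS, hS]) (Finset.mem_insert_self w S) i
  have hR : Set.range f \ {f i} = S := by
    rw [hf, hfi, Finset.coe_insert, Set.insert_sdiff_self_of_notMem (by simpa using hwS)]
  obtain ⟨g, hfg, hgi⟩ := exists_reflTransGen_apply_eq_of_walk p hfi fun x hx => by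
    obtain ⟨m, hm, hxm⟩ := hSeq x hx
    rw [hR]
    exact ⟨fun hxS => hm.ne' (by simpa using (hxm x hxS).symm),
      isGenPosSet_insert_of_forall_dist_eq (hQ.subset hSQ') hm hxm⟩
  have hfQ : Set.range f ⊆ Q := by
    rw [hf, Finset.coe_insert]
    exact Set.insert_subset hw hSQ'
  exact ⟨g, (reflTransGen_of_isClique hQ hP (by omega) hf₀ hfQ).trans hfg, hgi⟩

lemma Nat.ceil_div_eq_ite {K : Type*} [Field K] [LinearOrder K] [IsStrictOrderedRing K]
    [FloorSemiring K] {a d q s : ℕ} (hd : 0 < d) (h : a = q * d + s) (hs : s < d) :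
    ⌈(a : K) / d⌉₊ = if s = 0 then q else q + 1 := by
  have hd' : (0 : K) < d := by exact_mod_cast hd
  have ha : (a : K) = q * d + s := by exact_mod_cast h
  have hs' : (s : K) < d := by exact_mod_cast hs
  split_ifs with h0
  · rw [ha, h0, Nat.cast_zero, add_zero, mul_div_cancel_right₀ _ hd'.ne', Nat.ceil_natCast]
  · have hs1 : (1 : K) ≤ s := by exact_mod_cast Nat.one_le_iff_ne_zero.mpr h0
    rw [Nat.ceil_eq_iff (by omega), Nat.add_sub_cancel, lt_div_iff₀ hd', div_le_iff₀ hd', ha]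
    push_cast
    constructor <;> linarith

lemma exists_one_add_ceil_div_sub_eq_add_two {ω D q s : ℕ} (hD : 2 ≤ D) (hω : 3 ≤ ω)
    (hqs : ω = q * D + s) (hs : s < D) :
    ∃ n, 1 + ⌈(ω : ℚ) / D⌉₊ - (if s = 1 then 1 else 0) = n + 2 ∧ D * n < ω - 1 ∧ n + 2 < ω := by
  rw [Nat.ceil_div_eq_ite (K := ℚ) (by omega) hqs hs]
  rw [mul_comm] at hqs
  have h2q : 2 * q ≤ D * q := Nat.mul_le_mul_right q hD
  have hpred : D * q = 0 ∨ 0 < q ∧ D * (q - 1) + D = D * q := by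
    rcases q with _ | q
    · simp
    · exact .inr ⟨q.succ_pos, by rw [Nat.add_sub_cancel]; ring⟩
  refine ⟨if s ≤ 1 then q - 1 else q, ?_⟩
  split_ifs <;> omega

lemma SimpleGraph.Connected.two_le_diam [Finite V] [Nontrivial V] {G : SimpleGraph V}
    (hconn : G.Connected) (hG : G ≠ ⊤) : 2 ≤ G.diam := by
  have h₀ := G.diam_ne_zero_of_ediam_ne_top (connected_iff_ediam_ne_top.mp hconn)
  have h₁ := mt G.diam_eq_one.mp hG
  omega

section Numbers

variable [Fintype V] {G : SimpleGraph V}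

lemma bddAbove_setOf_exists_embedding (Φ : ∀ {t : ℕ}, (Fin t ↪ V) → Prop) :
    BddAbove {t : ℕ | ∃ f : Fin t ↪ V, Φ f} :=
  ⟨Fintype.card V, by rintro _ ⟨f, -⟩; simpa using Fintype.card_le_of_embedding f⟩

lemma le_cmobGP {t : ℕ} {f : Fin t ↪ V} (hf : IsCompletelyMobileConfig G (IsGenPosSet G) f) :
    t ≤ cmobGP G :=
  le_csSup (bddAbove_setOf_exists_embedding _) ⟨f, hf⟩

lemma cmobGP_le_mobGP : cmobGP G ≤ mobGP G :=
  csSup_le_csSup' (bddAbove_setOf_exists_embedding _) fun _ ⟨f, hf⟩ => ⟨f, hf.1⟩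

end Numbers

theorem stmt_1 {V : Type*} [Fintype V] (G : SimpleGraph V) (hconn : G.Connected)
    (hnc : G ≠ ⊤) (hω : 3 ≤ G.cliqueNum) (q s : ℕ)
    (hqs : G.cliqueNum = q * G.diam + s) (hs : s ≤ G.diam - 1) :
    1 + ⌈(G.cliqueNum : ℚ) / (G.diam : ℚ)⌉₊ - (if s = 1 then 1 else 0) ≤ cmobGP G ∧
      cmobGP G ≤ mobGP G := by
  obtain ⟨Q, hQ⟩ := G.exists_isNClique_cliqueNum
  obtain ⟨a, -, b, -, hab⟩ := Finset.one_lt_card.mp (hQ.card_eq ▸ (by omega : 1 < G.cliqueNum))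
  have : Nontrivial V := nontrivial_of_ne a b hab
  have hD := hconn.two_le_diam hnc
  obtain ⟨n, hρ, hn, hnQ⟩ := exists_one_add_ceil_div_sub_eq_add_two hD hω hqs (by omega)
  rw [← hQ.card_eq] at hn hnQ
  obtain ⟨f, hf⟩ := hconn.exists_isCompletelyMobileConfig_isGenPosSet hQ.isClique hn hnQ
  exact ⟨hρ ▸ le_cmobGP hf, cmobGP_le_mobGP⟩
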